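/- arXiv:math/0310096 — 3 statements merged into one kernel-verified Lean document; each statement's English description precedes it below -/
import Mathlib

section
/- Let W be an ideal of a Bol algebra B over a field K of characteristic 0, and let W^(0) = W, W^(n+1) = W^(n)·W^(n) + (W^(n),W^(n),B) be its derived series. Then for every n ≥ 1, W^(n) is an ideal of W^(n-1); explicitly, W^(n) ⊆ W^(n-1), W^(n-1)·W^(n) ⊆ W^(n), and (W^(n), W^(n-1), W^(n-1)) ⊆ W^(n). -/
/-- A Bol algebra structure on a `K`-vector space `V`: a bilinear operation `mul`
and a trilinear operation `tri` satisfying the Bol algebra identities. -/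
structure BolStr (K V : Type*) [Field K] [AddCommGroup V] [Module K V] where
  mul : V →ₗ[K] V →ₗ[K] V
  tri : V →ₗ[K] V →ₗ[K] V →ₗ[K] V
  mul_self : ∀ x, mul x x = 0
  tri_right : ∀ x y, tri x y y = 0
  tri_cyclic : ∀ x y z, tri x y z + tri y z x + tri z x y = 0
  bol_iv : ∀ x y z w,
    mul (tri x y z) w - mul (tri x y w) z + tri z w (mul x y)
      - tri x y (mul z w) + mul (mul x y) (mul z w) = 0
  bol_v : ∀ x y z w v,
    tri x y (tri z w v)
      = tri (tri x y z) w v + tri z (tri x y w) v + tri z w (tri x y v)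

variable {K V : Type*} [Field K] [AddCommGroup V] [Module K V]

/-- The span of products `u·w`, `u ∈ U`, `w ∈ W`. -/
def sMul (A : BolStr K V) (U W : Submodule K V) : Submodule K V :=
  Submodule.span K {z | ∃ u ∈ U, ∃ w ∈ W, z = A.mul u w}

/-- The span of triple products `(u,w,x)`, `u ∈ U`, `w ∈ W`, `x ∈ X`. -/
def sTri (A : BolStr K V) (U W X : Submodule K V) : Submodule K V :=
  Submodule.span K {z | ∃ u ∈ U, ∃ w ∈ W, ∃ x ∈ X, z = A.tri u w x}

/-- A subspace `W` is an ideal of the Bol algebra if `W·B ⊆ W` and `(W,B,B) ⊆ W`. -/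
def IsBolIdeal (A : BolStr K V) (W : Submodule K V) : Prop :=
  sMul A W ⊤ ≤ W ∧ sTri A W ⊤ ⊤ ≤ W

/-- The derived series of an ideal: `W⁽⁰⁾ = W`,
`W⁽ⁿ⁺¹⁾ = W⁽ⁿ⁾·W⁽ⁿ⁾ + (W⁽ⁿ⁾,W⁽ⁿ⁾,B)`. -/
def derSeries (A : BolStr K V) (W : Submodule K V) : ℕ → Submodule K V
  | 0 => W
  | n + 1 => sMul A (derSeries A W n) (derSeries A W n)
      ⊔ sTri A (derSeries A W n) (derSeries A W n) ⊤

theorem sMul_mono (A : BolStr K V) {U U' W W' : Submodule K V}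
    (hU : U ≤ U') (hW : W ≤ W') : sMul A U W ≤ sMul A U' W' :=
  Submodule.span_mono fun z ⟨u, hu, w, hw, hz⟩ => ⟨u, hU hu, w, hW hw, hz⟩

theorem sTri_mono (A : BolStr K V) {U U' W W' X X' : Submodule K V}
    (hU : U ≤ U') (hW : W ≤ W') (hX : X ≤ X') : sTri A U W X ≤ sTri A U' W' X' :=
  Submodule.span_mono fun z ⟨u, hu, w, hw, x, hx, hz⟩ =>
    ⟨u, hU hu, w, hW hw, x, hX hx, hz⟩

theorem derSeries_succ_le (A : BolStr K V) (W : Submodule K V)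
    (hW : IsBolIdeal A W) :
    ∀ n : ℕ, derSeries A W (n + 1) ≤ derSeries A W n := by
  intro n
  induction n with
  | zero =>
    exact sup_le (le_trans (sMul_mono A le_rfl le_top) hW.1)
      (le_trans (sTri_mono A le_rfl le_top le_rfl) hW.2)
  | succ m ih =>
    exact sup_le
      (le_trans (sMul_mono A ih ih) le_sup_left)
      (le_trans (sTri_mono A ih ih le_rfl) le_sup_right)

/-- If `W` is an ideal of a Bol algebra `B` over a field of
characteristic zero, then for every `n ≥ 1` the term `W⁽ⁿ⁾` of the derived series
is an ideal of `W⁽ⁿ⁻¹⁾`: it is contained in `W⁽ⁿ⁻¹⁾`, `W⁽ⁿ⁻¹⁾·W⁽ⁿ⁾ ⊆ W⁽ⁿ⁾` and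
`(W⁽ⁿ⁾, W⁽ⁿ⁻¹⁾, W⁽ⁿ⁻¹⁾) ⊆ W⁽ⁿ⁾`. -/
theorem derSeries_succ_isIdeal_in_pred [CharZero K] (A : BolStr K V)
    (W : Submodule K V) (hW : IsBolIdeal A W) :
    ∀ n : ℕ, 1 ≤ n →
      derSeries A W n ≤ derSeries A W (n - 1) ∧
      sMul A (derSeries A W (n - 1)) (derSeries A W n) ≤ derSeries A W n ∧
      sTri A (derSeries A W n) (derSeries A W (n - 1)) (derSeries A W (n - 1))
        ≤ derSeries A W n := by
  rintro n hn
  obtain ⟨m, rfl⟩ := Nat.exists_eq_add_of_le hn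
  simp only [Nat.add_comm 1 m, Nat.add_sub_cancel]
  have h := derSeries_succ_le A W hW m
  refine ⟨h, ?_, ?_⟩
  · exact le_trans (sMul_mono A le_rfl h) (le_sup_left)
  · exact le_trans (sTri_mono A h le_rfl le_top) le_sup_right
end

section
/- Let (G,B) be an enveloping pair for a Bol algebra B over a field K of characteristic 0, and let V be an ideal of B. Then the subspace W = V + [V,B] of G (where [V,B] is the span of all [v,x] with v ∈ V, x ∈ B) is a Lie ideal of G, the sum is direct (V ∩ [V,B] = 0), and W is the smallest Lie ideal of G containing V, i.e., the Lie ideal of G generated by V coincides with V ∔ [V,B]. -/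
variable (K : Type*) {G : Type*} [Field K] [LieRing G] [LieAlgebra K G]

/-- The span of brackets `⁅u, w⁆`, `u ∈ U`, `w ∈ W`, for subspaces of a Lie algebra. -/
def lbrk (U W : Submodule K G) : Submodule K G :=
  Submodule.span K {z | ∃ u ∈ U, ∃ w ∈ W, z = ⁅u, w⁆}

/-- `(G, B)` is an enveloping pair for a Bol algebra: `G = B + [B,B]`,
`B ∩ [B,B] = 0` and `[B,[B,B]] ⊆ B`. -/
def IsEnvPair (B : Submodule K G) : Prop :=
  B ⊔ lbrk K B B = ⊤ ∧ B ⊓ lbrk K B B = ⊥ ∧ lbrk K B (lbrk K B B) ≤ B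

/-- `π` is the projection of `G` onto `B` along `[B,B]`. -/
def IsProjOntoB (B : Submodule K G) (π : G →ₗ[K] G) : Prop :=
  (∀ g, π g ∈ B) ∧ (∀ x ∈ B, π x = x) ∧ (∀ y ∈ lbrk K B B, π y = 0)

/-- The span of Bol products `ξ·η = π(⁅ξ,η⁆)` for `ξ ∈ U`, `η ∈ W`. -/
def bMul (π : G →ₗ[K] G) (U W : Submodule K G) : Submodule K G :=
  Submodule.span K {z | ∃ u ∈ U, ∃ w ∈ W, z = π ⁅u, w⁆}

/-- The span of Bol triple products `(ξ,η,ζ) = ⁅ζ,⁅ξ,η⁆⁆` for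
`ξ ∈ U`, `η ∈ W`, `ζ ∈ X`. -/
def bTri (U W X : Submodule K G) : Submodule K G :=
  Submodule.span K {z | ∃ u ∈ U, ∃ w ∈ W, ∃ x ∈ X, z = ⁅x, ⁅u, w⁆⁆}

/-- A subspace `V ⊆ B` is an ideal of the Bol algebra `B` if `V·B ⊆ V` and
`(V,B,B) ⊆ V`. -/
def IsBolIdealOf (B : Submodule K G) (π : G →ₗ[K] G) (V : Submodule K G) : Prop :=
  V ≤ B ∧ bMul K π V B ≤ V ∧ bTri K V B B ≤ V

/-- The derived series of a Bol ideal: `V⁽⁰⁾ = V`,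
`V⁽ⁿ⁺¹⁾ = V⁽ⁿ⁾·V⁽ⁿ⁾ + (V⁽ⁿ⁾,V⁽ⁿ⁾,B)`. -/
def bolDer (B : Submodule K G) (π : G →ₗ[K] G) (V : Submodule K G) :
    ℕ → Submodule K G
  | 0 => V
  | n + 1 => bMul K π (bolDer B π V n) (bolDer B π V n)
      ⊔ bTri K (bolDer B π V n) (bolDer B π V n) B

/-- The Lie derived series of a subspace: `W⁽⁰⁾ = W`, `W⁽ⁿ⁺¹⁾ = [W⁽ⁿ⁾, W⁽ⁿ⁾]`. -/
def lieDer (W : Submodule K G) : ℕ → Submodule K G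
  | 0 => W
  | n + 1 => lbrk K (lieDer W n) (lieDer W n)

lemma lbrk_le_iff {U W X : Submodule K G} :
    lbrk K U W ≤ X ↔ ∀ u ∈ U, ∀ w ∈ W, ⁅u, w⁆ ∈ X := by
  constructor
  · intro h u hu w hw
    exact h (Submodule.subset_span ⟨u, hu, w, hw, rfl⟩)
  · intro h
    rw [lbrk, Submodule.span_le]
    rintro z ⟨u, hu, w, hw, rfl⟩
    exact h u hu w hw

lemma lie_mem_lbrk {U W : Submodule K G} {u w : G} (hu : u ∈ U) (hw : w ∈ W) :
    ⁅u, w⁆ ∈ lbrk K U W :=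
  Submodule.subset_span ⟨u, hu, w, hw, rfl⟩

lemma left_lie_mem {B X : Submodule K G} (hsup : B ⊔ lbrk K B B = ⊤) {t : G}
    (hB : ∀ x ∈ B, ⁅x, t⁆ ∈ X) (hBB : ∀ x ∈ B, ∀ y ∈ B, ⁅⁅x, y⁆, t⁆ ∈ X)
    (g : G) : ⁅g, t⁆ ∈ X := by
  have key : (⊤ : Submodule K G) ≤ X.comap (-(LieAlgebra.ad K G t)) := by
    rw [← hsup]
    refine sup_le ?_ ?_
    · intro x hx
      simp only [Submodule.mem_comap, LinearMap.neg_apply, LieAlgebra.ad_apply, lie_skew]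
      exact hB x hx
    · rw [lbrk, Submodule.span_le]
      rintro z ⟨x, hx, y, hy, rfl⟩
      simp only [SetLike.mem_coe, Submodule.mem_comap, LinearMap.neg_apply,
        LieAlgebra.ad_apply, lie_skew]
      exact hBB x hx y hy
  have := key (Submodule.mem_top (x := g))
  simpa only [Submodule.mem_comap, LinearMap.neg_apply, LieAlgebra.ad_apply, lie_skew]
    using this

/-- Let `(G,B)` be an enveloping pair for a Bol algebra over a field of
characteristic zero and `V` an ideal of `B`.  Then `W = V + [V,B]` is a Lie ideal of `G`,
the sum is direct (`V ∩ [V,B] = 0`), and `W` is the smallest Lie ideal of `G`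
containing `V`. -/
theorem lieIdeal_generated_by_bol_ideal [CharZero K]
    (B : Submodule K G) (hpair : IsEnvPair K B)
    (π : G →ₗ[K] G) (hπ : IsProjOntoB K B π)
    (V : Submodule K G) (hV : IsBolIdealOf K B π V) :
    lbrk K ⊤ (V ⊔ lbrk K V B) ≤ V ⊔ lbrk K V B ∧
    V ⊓ lbrk K V B = ⊥ ∧
    ∀ J : Submodule K G, lbrk K ⊤ J ≤ J → V ≤ J → V ⊔ lbrk K V B ≤ J := by
  obtain ⟨hsup, hinf, _⟩ := hpair
  obtain ⟨hVB, _, hTri⟩ := hV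
  set W : Submodule K G := V ⊔ lbrk K V B with hWdef
  have hVW : V ≤ W := le_sup_left
  have hVBW : lbrk K V B ≤ W := le_sup_right
  -- [B, V] ⊆ W
  have hBV : ∀ x ∈ B, ∀ v ∈ V, ⁅x, v⁆ ∈ W := by
    intro x hx v hv
    have h := hVBW (lie_mem_lbrk K hv hx)
    rw [← lie_skew] at h
    simpa using W.neg_mem h
  -- [B, [V, B]] ⊆ V
  have h1 : ∀ x ∈ B, ∀ v ∈ V, ∀ b ∈ B, ⁅x, ⁅v, b⁆⁆ ∈ V := by
    intro x hx v hv b hb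
    exact hTri (Submodule.subset_span ⟨v, hv, b, hb, x, hx, rfl⟩)
  -- [[B, B], V] ⊆ V
  have h2 : ∀ x ∈ B, ∀ y ∈ B, ∀ v ∈ V, ⁅⁅x, y⁆, v⁆ ∈ V := by
    intro x hx y hy v hv
    rw [lie_lie]
    refine V.sub_mem ?_ ?_
    · rw [← lie_skew y v, lie_neg]
      exact V.neg_mem (h1 x hx v hv y hy)
    · rw [← lie_skew x v, lie_neg]
      exact V.neg_mem (h1 y hy v hv x hx)
  -- [[B, B], [V, B]] ⊆ W
  have h3 : ∀ x ∈ B, ∀ y ∈ B, ∀ v ∈ V, ∀ b ∈ B, ⁅⁅x, y⁆, ⁅v, b⁆⁆ ∈ W := by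
    intro x hx y hy v hv b hb
    rw [lie_lie]
    exact W.sub_mem (hBV x hx _ (h1 y hy v hv b hb)) (hBV y hy _ (h1 x hx v hv b hb))
  refine ⟨?_, ?_, ?_⟩
  · rw [lbrk_le_iff]
    intro g _ w hw
    have hmain : W ≤ Submodule.comap (LieAlgebra.ad K G g) W := by
      refine sup_le ?_ ?_
      · intro v hv
        simp only [Submodule.mem_comap, LieAlgebra.ad_apply]
        exact left_lie_mem K hsup (fun x hx => hBV x hx v hv)
          (fun x hx y hy => hVW (h2 x hx y hy v hv)) g
      · rw [lbrk, Submodule.span_le]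
        rintro z ⟨v, hv, b, hb, rfl⟩
        simp only [SetLike.mem_coe, Submodule.mem_comap, LieAlgebra.ad_apply]
        exact left_lie_mem K hsup (fun x hx => hVW (h1 x hx v hv b hb))
          (fun x hx y hy => h3 x hx y hy v hv b hb) g
    have := hmain hw
    simpa only [Submodule.mem_comap, LieAlgebra.ad_apply] using this
  · refine le_antisymm (le_trans (inf_le_inf hVB ?_) hinf.le) bot_le
    rw [lbrk_le_iff]
    intro u hu w hw
    exact lie_mem_lbrk K (hVB hu) hw
  · intro J hJ hVJ
    refine sup_le hVJ ?_
    rw [lbrk_le_iff]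
    intro v hv b hb
    have h : (⁅b, v⁆ : G) ∈ J := hJ (lie_mem_lbrk K Submodule.mem_top (hVJ hv))
    rw [← lie_skew b v] at h
    exact neg_mem_iff.mp h
end

section
/- Let B be a Bol algebra over a field K of characteristic 0 equipped with a nondegenerate invariant symmetric bilinear form b. Then the orthogonal complement of the derived ideal B^(1) = B·B + (B,B,B) with respect to b equals the center C of B: (B^(1))^⊥ = C. -/
variable {K V : Type*} [Field K] [AddCommGroup V] [Module K V]

/-- The center of a Bol algebra: `C = {X | B·X = 0 and (B,B,X) = 0}`. -/
def bolCenter (A : BolStr K V) : Submodule K V where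
  carrier := {X | (∀ y, A.mul y X = 0) ∧ ∀ y z, A.tri y z X = 0}
  add_mem' := by
    intro a b ha hb
    refine ⟨fun y => ?_, fun y z => ?_⟩
    · rw [map_add, ha.1 y, hb.1 y, add_zero]
    · rw [map_add, ha.2 y z, hb.2 y z, add_zero]
  zero_mem' := ⟨fun y => map_zero _, fun y z => map_zero _⟩
  smul_mem' := by
    intro c a ha
    refine ⟨fun y => ?_, fun y z => ?_⟩
    · rw [map_smul, ha.1 y, smul_zero]
    · rw [map_smul, ha.2 y z, smul_zero]

/-- The orthogonal complement of a subspace `S` with respect to a bilinear form `b`: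
`S^⊥ = {X | b(X,s) = 0 for all s ∈ S}`. -/
def perp (b : V →ₗ[K] V →ₗ[K] K) (S : Submodule K V) : Submodule K V where
  carrier := {X | ∀ s ∈ S, b X s = 0}
  add_mem' := by
    intro x y hx hy s hs
    rw [map_add, LinearMap.add_apply, hx s hs, hy s hs, add_zero]
  zero_mem' := fun s _ => by rw [map_zero, LinearMap.zero_apply]
  smul_mem' := by
    intro c x hx s hs
    rw [map_smul, LinearMap.smul_apply, hx s hs, smul_zero]

/-- Let `B` be a Bol algebra over a field of characteristic zero with a
nondegenerate invariant symmetric bilinear form `b`.  Then the orthogonal complement of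
the derived ideal `B⁽¹⁾ = B·B + (B,B,B)` equals the center `C`. -/
theorem perp_derived_eq_center [CharZero K] (A : BolStr K V)
    (b : V →ₗ[K] V →ₗ[K] K)
    (hsymm : ∀ x y, b x y = b y x)
    (hnd : ∀ x, (∀ y, b x y = 0) → x = 0)
    (hinv₁ : ∀ x y z, b (A.mul x y) z = b x (A.mul y z))
    (hinv₂ : ∀ x y z t, b (A.tri x y z) t = b z (A.tri x y t)) :
    perp b (sMul A ⊤ ⊤ ⊔ sTri A ⊤ ⊤ ⊤) = bolCenter A := by
  ext X
  constructor
  · intro hX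
    have hmul : ∀ u w, b X (A.mul u w) = 0 := fun u w =>
      hX _ (Submodule.mem_sup_left (Submodule.subset_span
        ⟨u, trivial, w, trivial, rfl⟩))
    have htri : ∀ u w x, b X (A.tri u w x) = 0 := fun u w x =>
      hX _ (Submodule.mem_sup_right (Submodule.subset_span
        ⟨u, trivial, w, trivial, x, trivial, rfl⟩))
    refine ⟨fun y => ?_, fun y z => ?_⟩
    · apply hnd
      intro t
      rw [hsymm]
      rw [← hinv₁ t y X, hsymm, hmul]
    · apply hnd
      intro t
      rw [hinv₂ y z X t, htri]
  · intro hX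
    have h1 : ∀ a ∈ sMul A ⊤ ⊤, b X a = 0 := by
      intro a ha
      induction ha using Submodule.span_induction with
      | mem x hx =>
        obtain ⟨u, -, w, -, rfl⟩ := hx
        rw [hsymm, hinv₁, hX.1 w, map_zero]
      | zero => simp
      | add x y _ _ hx hy => rw [map_add, hx, hy, add_zero]
      | smul c x _ hx => rw [map_smul, hx, smul_zero]
    have h2 : ∀ c ∈ sTri A ⊤ ⊤ ⊤, b X c = 0 := by
      intro c hc
      induction hc using Submodule.span_induction with
      | mem x hx =>
        obtain ⟨u, -, w, -, x, -, rfl⟩ := hx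
        rw [hsymm, hinv₂, hX.2 u w, map_zero]
      | zero => simp
      | add x y _ _ hx hy => rw [map_add, hx, hy, add_zero]
      | smul c x _ hx => rw [map_smul, hx, smul_zero]
    intro s hs
    rcases Submodule.mem_sup.mp hs with ⟨a, ha, c, hc, rfl⟩
    rw [map_add, h1 a ha, h2 c hc, add_zero]
end
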